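/- Let k be even and let g ∈ S_{k−2,ℝ} be a nonzero cusp form of weight k−2 with real Fourier coefficients, and set f = Dg (a quasimodular form of weight k and depth 1). Then f has at least two real zeros in ℍ: there exists y > 0 with f(iy) = 0 (a zero on the central line {z ∈ ℍ : Re(z) = 0}) and there exists y' > 0 with f(1/2 + iy') = 0 (a zero on the line {z ∈ ℍ : Re(z) = 1/2}). -/

import Mathlib

open Filter Topology
open scoped Classical

noncomputable section

/-- `2πi` as a complex number. -/
def twoPiI : ℂ := 2 * Real.pi * Complex.I

/-- The upper half-plane, viewed as a subset of `ℂ`. -/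
def UHP : Set ℂ := {z : ℂ | 0 < z.im}

/-- `f` is weakly modular of weight `k` for the full modular group `PSL₂(ℤ)`. -/
def IsWeaklyModular (k : ℤ) (f : ℂ → ℂ) : Prop :=
  ∀ a b c d : ℤ, a * d - b * c = 1 → ∀ z ∈ UHP,
    f (((a : ℂ) * z + b) / ((c : ℂ) * z + d)) = ((c : ℂ) * z + d) ^ k * f z

/-- `f` has the `q`-expansion with coefficients `c` on the upper half-plane,
i.e. `f z = ∑_{n ≥ 0} c n * q^n` with `q = exp(2πiz)`. -/
def HasQExp (f : ℂ → ℂ) (c : ℕ → ℂ) : Prop :=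
  ∀ z ∈ UHP, HasSum (fun n : ℕ => c n * Complex.exp (twoPiI * n * z)) (f z)

/-- A holomorphic modular form of weight `k` for `PSL₂(ℤ)` with `q`-expansion
coefficients `c`. -/
def IsModularForm (k : ℤ) (f : ℂ → ℂ) (c : ℕ → ℂ) : Prop :=
  DifferentiableOn ℂ f UHP ∧ IsWeaklyModular k f ∧ HasQExp f c

/-- The divisor power sum `σ_j(n)` (equal to `0` for `n = 0`). -/
def sigmaC (j n : ℕ) : ℂ := ∑ d ∈ n.divisors, (d : ℂ) ^ j

/-- The normalized Eisenstein series `E_k = 1 - (2k/B_k) ∑ σ_{k-1}(n) qⁿ`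
(with the conventions `E₀ = 1`). -/
def Ek (k : ℕ) : ℂ → ℂ := fun z =>
  1 - (2 * k / ((bernoulli k : ℚ) : ℂ)) *
    ∑' n : ℕ, sigmaC (k - 1) n * Complex.exp (twoPiI * n * z)

/-- The quasimodular Eisenstein series `E₂`. -/
def E2 : ℂ → ℂ := Ek 2

/-- The normalized derivation `D = (2πi)⁻¹ d/dz = q d/dq`. -/
def Dop (f : ℂ → ℂ) : ℂ → ℂ := fun z => (twoPiI)⁻¹ * deriv f z

/-- The discriminant cusp form `Δ = q ∏ (1-qⁿ)²⁴`. -/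
def Disc : ℂ → ℂ := fun z =>
  Complex.exp (twoPiI * z) * ∏' n : ℕ, (1 - Complex.exp (twoPiI * (n + 1) * z)) ^ 24

/-- The modular `j`-invariant `j = E₄³/Δ`. -/
def jfun : ℂ → ℂ := fun z => (Ek 4 z) ^ 3 / Disc z

/-- The filter of neighbourhoods of `i∞`, on `ℂ`. -/
def atImInfty : Filter ℂ := Filter.comap Complex.im Filter.atTop

/-- The finite part of the standard fundamental domain `F` of `PSL₂(ℤ)`. -/
def Fdom : Set ℂ :=
  {z : ℂ | 0 < z.im ∧ -(1/2 : ℝ) < z.re ∧ z.re ≤ 1/2 ∧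
    (z.re < 0 → 1 < ‖z‖) ∧ (0 ≤ z.re → 1 ≤ ‖z‖)}

/-- The finite part of the shifted fundamental domain `ℱ` of `PSL₂(ℤ)`. -/
def Fdom' : Set ℂ :=
  {z : ℂ | 0 < z.im ∧ 0 ≤ z.re ∧ z.re < 1 ∧
    (z.re ≤ 1/2 → 1 ≤ ‖z‖) ∧ (1/2 < z.re → 1 < ‖z - 1‖)}

/-- `f` is a quasimodular form of weight `k` and depth at most `p` for `PSL₂(ℤ)`:
`f = ∑_{i ≤ p} f_i E₂^i` with `f_i` a modular form of weight `k - 2i`. -/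
def IsQuasimodular (k : ℤ) (p : ℕ) (f : ℂ → ℂ) : Prop :=
  ∃ (g : ℕ → ℂ → ℂ) (c : ℕ → ℕ → ℂ),
    (∀ i ≤ p, IsModularForm (k - 2 * i) (g i) (c i)) ∧
    ∀ z ∈ UHP, f z = ∑ i ∈ Finset.range (p + 1), g i z * E2 z ^ i

/-- `f` is a quasimodular form of weight `k` and depth at most `p` all of whose
Fourier coefficients are real (each component `f_i` has real coefficients). -/
def IsQuasimodularR (k : ℤ) (p : ℕ) (f : ℂ → ℂ) : Prop :=
  ∃ (g : ℕ → ℂ → ℂ) (c : ℕ → ℕ → ℝ),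
    (∀ i ≤ p, IsModularForm (k - 2 * i) (g i) (fun n => ((c i n : ℝ) : ℂ))) ∧
    ∀ z ∈ UHP, f z = ∑ i ∈ Finset.range (p + 1), g i z * E2 z ^ i

/-- `f` is a quasimodular form of weight `k` and depth exactly `p`. -/
def IsQuasimodularDepth (k : ℤ) (p : ℕ) (f : ℂ → ℂ) : Prop :=
  ∃ (g : ℕ → ℂ → ℂ) (c : ℕ → ℕ → ℂ),
    (∀ i ≤ p, IsModularForm (k - 2 * i) (g i) (c i)) ∧
    (∀ z ∈ UHP, f z = ∑ i ∈ Finset.range (p + 1), g i z * E2 z ^ i) ∧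
    ∃ z ∈ UHP, g p z ≠ 0

/-- `ℓ = dim S_k`, i.e. `k = 12ℓ + k'` with `k' ∈ {0,4,6,8,10,14}`. -/
def ell (k : ℕ) : ℕ := if k % 12 = 2 then k / 12 - 1 else k / 12

/-- `k' ∈ {0,4,6,8,10,14}` with `k = 12ℓ + k'`. -/
def kres (k : ℕ) : ℕ := k - 12 * ell k

/-- `z` and `w` are `PSL₂(ℤ)`-equivalent. -/
def ModEquiv (z w : ℂ) : Prop :=
  ∃ a b c d : ℤ, a * d - b * c = 1 ∧ ((a : ℂ) * z + b) / ((c : ℂ) * z + d) = w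

/-- The ramification index `e_z`: `2` at points equivalent to `i`, `3` at points
equivalent to `ρ = e^{iπ/3}`, and `1` otherwise. -/
def eWeight (z : ℂ) : ℚ :=
  if ModEquiv z Complex.I then 2
  else if ModEquiv z (Complex.exp (Real.pi * Complex.I / 3)) then 3
  else 1

/-- The order of vanishing of `f` at `z` (junk value `0` if `f` vanishes to
infinite order at `z`). -/
def zorder (f : ℂ → ℂ) (z : ℂ) : ℕ := sInf {n : ℕ | iteratedDeriv n f z ≠ 0}

/-- `f` is the basis element `f_{k,m}` of the space of weakly holomorphic modular
forms of weight `k`: it is weakly modular of weight `k`, holomorphic on `ℍ`, and has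
`q`-expansion `q^{-m} + O(q^{ℓ+1})` with coefficients `c`. -/
def IsGapForm (k : ℕ) (m : ℤ) (f : ℂ → ℂ) (c : ℤ → ℂ) : Prop :=
  DifferentiableOn ℂ f UHP ∧ IsWeaklyModular k f ∧
  (∀ z ∈ UHP, HasSum (fun n : ℕ => c (-m + n) * Complex.exp (twoPiI * ((-m + n : ℤ) : ℂ) * z)) (f z)) ∧
  c (-m) = 1 ∧ (∀ n : ℤ, -m < n → n ≤ (ell k : ℤ) → c n = 0)

/-- The kernel function `H₁(τ,z)` of Duke–Jenkins type, for weight `k` and index `m`. -/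
def H1 (k : ℕ) (m : ℤ) (τ z : ℂ) : ℂ :=
  -(1 / twoPiI) * (Disc z ^ ell k / (Disc τ ^ ell k * Ek (kres k) τ)) *
    ((ell k : ℂ) * E2 z * Ek (kres k) z + Dop (Ek (kres k)) z) *
    (deriv jfun τ / (jfun τ - jfun z)) * Complex.exp (-(twoPiI * m * τ))

/-- The kernel function `H₂(τ,z)`, for weight `k` and index `m`. -/
def H2 (k : ℕ) (m : ℤ) (τ z : ℂ) : ℂ :=
  (1 / (4 * (Real.pi : ℂ) ^ 2)) *
    (Disc z ^ ell k * Ek (kres k) z / (Disc τ ^ ell k * Ek (kres k) τ)) *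
    (deriv jfun z * deriv jfun τ / (jfun τ - jfun z) ^ 2) * Complex.exp (-(twoPiI * m * τ))

/-- The kernel function `H(τ,z) = H₁(τ,z) + H₂(τ,z)`. -/
def Hfun (k : ℕ) (m : ℤ) (τ z : ℂ) : ℂ := H1 k m τ z + H2 k m τ z

end


/-!
On the lines `Re z = 0` and `Re z = 1/2` the parameter `q = e^{2πiz}` is real, so a cusp form `g`
with real coefficients is real-valued there. It decays like `e^{-2πy}` as `y → ∞`, and the
elliptic involutions `z ↦ -1/z` and `z ↦ (z - 1)/(2z - 1)`, which map these lines to themselves and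
exchange their two ends, turn this into decay as `y → 0⁺`. Rolle's theorem on `(0, ∞)` then gives
a critical point of `y ↦ g(x + iy)`, that is, a zero of `g'` on the line.
-/

open Set Real

theorem exists_hasDerivAt_eq_zero_Ioi {f f' : ℝ → ℝ} {a l : ℝ}
    (hfa : Tendsto f (𝓝[>] a) (𝓝 l)) (hftop : Tendsto f atTop (𝓝 l))
    (hff' : ∀ x ∈ Ioi a, HasDerivAt f (f' x) x) : ∃ c ∈ Ioi a, f' c = 0 := by
  -- `t ↦ a + tan t` maps `(0, π/2)` increasingly onto `(a, ∞)`.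
  set e : ℝ → ℝ := fun t => a + Real.tan t
  have he_mem : ∀ t ∈ Ioo 0 (π / 2), e t ∈ Ioi a := fun t ht => by
    simp [e, Real.tan_pos_of_pos_of_lt_pi_div_two ht.1 ht.2]
  have hcos : ∀ t ∈ Ioo 0 (π / 2), Real.cos t ≠ 0 := fun t ht =>
    (Real.cos_pos_of_mem_Ioo ⟨by linarith [ht.1, Real.pi_pos], ht.2⟩).ne'
  have he0 : Tendsto e (𝓝[>] 0) (𝓝[>] a) := by
    refine tendsto_nhdsWithin_iff.2 ⟨?_, ?_⟩
    · have : ContinuousAt e 0 := continuousAt_const.add (Real.continuousAt_tan.2 (by simp))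
      simpa [e] using this.tendsto.mono_left nhdsWithin_le_nhds
    · filter_upwards [Ioo_mem_nhdsGT (by positivity : (0:ℝ) < π / 2)] with t ht using he_mem t ht
  have hetop : Tendsto e (𝓝[<] (π / 2)) atTop :=
    tendsto_atTop_add_const_left _ _ Real.tendsto_tan_pi_div_two
  obtain ⟨t, ht, hderiv⟩ := exists_hasDerivAt_eq_zero' (by positivity) (hfa.comp he0)
    (hftop.comp hetop)
    (fun t ht => (hff' _ (he_mem t ht)).comp t ((Real.hasDerivAt_tan (hcos t ht)).const_add a))
  exact ⟨e t, he_mem t ht, by simpa [hcos t ht] using hderiv⟩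

theorem exists_hasDerivAt_eq_zero_Ioi_of_im_eq_zero {φ φ' : ℝ → ℂ} {a : ℝ} {l : ℂ}
    (hφa : Tendsto φ (𝓝[>] a) (𝓝 l)) (hφtop : Tendsto φ atTop (𝓝 l))
    (hφ : ∀ x ∈ Ioi a, HasDerivAt φ (φ' x) x) (him : ∀ x ∈ Ioi a, (φ x).im = 0) :
    ∃ c ∈ Ioi a, φ' c = 0 := by
  obtain ⟨c, hc, hre⟩ := exists_hasDerivAt_eq_zero_Ioi
    ((Complex.continuous_re.tendsto l).comp hφa) ((Complex.continuous_re.tendsto l).comp hφtop)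
    (fun x hx => (Complex.reCLM.hasFDerivAt.comp_hasDerivAt x (hφ x hx) :))
  have him_const : (fun x => (φ x).im) =ᶠ[𝓝 c] fun _ => 0 :=
    eventually_of_mem (isOpen_Ioi.mem_nhds hc) him
  have him' : (φ' c).im = 0 :=
    (Complex.imCLM.hasFDerivAt.comp_hasDerivAt c (hφ c hc)).unique
      ((hasDerivAt_const c 0).congr_of_eventuallyEq him_const)
  exact ⟨c, hc, Complex.ext hre him'⟩

theorem isOpen_UHP : IsOpen UHP := isOpen_lt continuous_const Complex.continuous_im

theorem HasQExp.im_eq_zero {f : ℂ → ℂ} {c : ℕ → ℝ} (hf : HasQExp f fun n => (c n : ℂ))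
    {z : ℂ} (hz : z ∈ UHP) (hq : (Complex.exp (twoPiI * z)).im = 0) : (f z).im = 0 := by
  have hterm : ∀ n : ℕ, ((c n : ℂ) * Complex.exp (twoPiI * n * z)).im = 0 := fun n => by
    rw [mul_comm twoPiI, mul_assoc, Complex.exp_nat_mul, ← Complex.re_add_im (Complex.exp _), hq]
    simp only [Complex.ofReal_zero, zero_mul, add_zero, ← Complex.ofReal_pow, ← Complex.ofReal_mul,
      Complex.ofReal_im]
  exact (Complex.hasSum_im (hf z hz)).unique (by simp [hterm])

theorem norm_exp_twoPiI_mul_natCast_mul (n : ℕ) (z : ℂ) :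
    ‖Complex.exp (twoPiI * n * z)‖ = Real.exp (-(2 * π * n * z.im)) := by
  simp [Complex.norm_exp, twoPiI, Complex.mul_re, Complex.mul_im]

theorem HasQExp.exists_norm_le {f : ℂ → ℂ} {c : ℕ → ℂ} (hf : HasQExp f c) (hc : c 0 = 0) :
    ∃ C, ∀ z : ℂ, 1 ≤ z.im → ‖f z‖ ≤ C * Real.exp (-(2 * π * z.im)) := by
  have hI : Complex.I ∈ UHP := by simp [UHP]
  set A : ℕ → ℝ := fun n => ‖c n * Complex.exp (twoPiI * n * Complex.I)‖
  have hA : Summable A := summable_norm_iff.2 (hf _ hI).summable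
  refine ⟨Real.exp (2 * π) * ∑' n, A n, fun z hz => ?_⟩
  have hterm : ∀ n : ℕ, ‖c n * Complex.exp (twoPiI * n * z)‖
      ≤ Real.exp (2 * π) * A n * Real.exp (-(2 * π * z.im)) := fun n => by
    rcases n.eq_zero_or_pos with rfl | hn
    · simp [A, hc]
    have hn1 : (1 : ℝ) ≤ n := by exact_mod_cast hn
    calc ‖c n * Complex.exp (twoPiI * n * z)‖ = ‖c n‖ * Real.exp (-(2 * π * n * z.im)) := by
          rw [norm_mul, norm_exp_twoPiI_mul_natCast_mul]
      _ ≤ ‖c n‖ * Real.exp (2 * π + -(2 * π * n) + -(2 * π * z.im)) := by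
          gcongr
          nlinarith [mul_nonneg (sub_nonneg.2 hn1) (sub_nonneg.2 hz), Real.pi_pos]
      _ = _ := by
          simp only [A, norm_mul, norm_exp_twoPiI_mul_natCast_mul, Complex.I_im, mul_one,
            Real.exp_add]
          ring
  calc ‖f z‖ ≤ ∑' n, Real.exp (2 * π) * A n * Real.exp (-(2 * π * z.im)) :=
        (hf z (by simp [UHP]; linarith)).norm_le_of_bounded
          ((hA.mul_left _).mul_right _).hasSum hterm
    _ = _ := by rw [tsum_mul_right, tsum_mul_left]

theorem HasQExp.isBigO_atTop {f : ℂ → ℂ} {c : ℕ → ℂ} (hf : HasQExp f c) (hc : c 0 = 0) (x : ℝ) :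
    (fun y : ℝ => f (x + Complex.I * y)) =O[atTop] fun y => Real.exp (-(2 * π * y)) := by
  obtain ⟨C, hC⟩ := hf.exists_norm_le hc
  refine Asymptotics.IsBigO.of_bound C ?_
  filter_upwards [eventually_ge_atTop 1] with y hy
  simpa using hC (x + Complex.I * y) (by simpa using hy)

theorem tendsto_nhdsGT_zero_of_norm_apply_inv {ψ : ℝ → ℂ} {r β : ℝ} {w : ℤ} (hr : 0 < r)
    (hβ : 0 < β) (hψ : ψ =O[atTop] fun t => Real.exp (-(β * t)))
    (hrel : ∀ y > 0, ‖ψ (r ^ 2 * y)⁻¹‖ = (r * y) ^ w * ‖ψ y‖) :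
    Tendsto ψ (𝓝[>] 0) (𝓝 0) := by
  have hu : Tendsto (fun y : ℝ => (r ^ 2 * y)⁻¹) (𝓝[>] 0) atTop := by
    simpa only [mul_inv] using tendsto_inv_nhdsGT_zero.const_mul_atTop (inv_pos.2 (pow_pos hr 2))
  have hdecay : Tendsto (fun t => (r * t) ^ w * Real.exp (-(β * t))) atTop (𝓝 0) := by
    have := ((isLittleO_zpow_exp_pos_mul_atTop w hβ).tendsto_div_nhds_zero).const_mul (r ^ w)
    rw [mul_zero] at this
    refine this.congr fun t => ?_
    rw [mul_zpow, Real.exp_neg, div_eq_mul_inv, mul_assoc]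
  have hF : Tendsto (fun t => (r * t) ^ w * ‖ψ t‖) atTop (𝓝 0) :=
    ((Asymptotics.isBigO_refl (fun t => (r * t) ^ w) atTop).mul hψ.norm_left).trans_tendsto
      hdecay
  refine tendsto_zero_iff_norm_tendsto_zero.2 ((hF.comp hu).congr' ?_)
  filter_upwards [self_mem_nhdsWithin] with y (hy : 0 < y)
  rw [Function.comp_apply, hrel y hy, ← mul_assoc, ← mul_zpow]
  rw [show r * (r ^ 2 * y)⁻¹ * (r * y) = 1 by field_simp, one_zpow, one_mul]

/-- The trace-zero matrix `(a b; c -a)` maps `x + iy` to `x + i/(c²y)`, with automorphy factor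
`c(x + iy) - a = icy`. -/
theorem IsWeaklyModular.apply_vertical_reflection {w : ℤ} {f : ℂ → ℂ} (hf : IsWeaklyModular w f)
    {a b c : ℤ} (habc : -a ^ 2 - b * c = 1) (hc : 0 < c) {x : ℝ} (hx : (a : ℝ) = c * x)
    {y : ℝ} (hy : 0 < y) :
    f (x + Complex.I * ↑((c : ℝ) ^ 2 * y)⁻¹) =
      (Complex.I * ↑(c * y)) ^ w * f (x + Complex.I * y) := by
  have hxC : (a : ℂ) = c * x := by exact_mod_cast hx
  have habcC : -(a : ℂ) ^ 2 - b * c = 1 := by exact_mod_cast habc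
  have hcy : (c : ℂ) * y ≠ 0 := by
    have : (0 : ℝ) < c * y := by positivity
    exact_mod_cast this.ne'
  have hden : (c : ℂ) * (x + Complex.I * y) + ((-a : ℤ) : ℂ) = Complex.I * ↑(c * y) := by
    push_cast
    linear_combination -hxC
  have hmap : ((a : ℂ) * (x + Complex.I * y) + b) / (c * (x + Complex.I * y) + ((-a : ℤ) : ℂ))
      = x + Complex.I * ↑((c : ℝ) ^ 2 * y)⁻¹ := by
    rw [hden, div_eq_iff (mul_ne_zero Complex.I_ne_zero (by exact_mod_cast hcy))]
    have hc0 : (c : ℂ) ≠ 0 := by exact_mod_cast hc.ne'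
    have hy0 : (y : ℂ) ≠ 0 := by exact_mod_cast hy.ne'
    push_cast
    field_simp
    linear_combination -habcC + (Complex.I * y * c - a) * hxC - Complex.I_sq
  rw [← hmap, ← hden]
  exact hf a b c (-a) (by linear_combination habc) _ (by simpa [UHP] using hy)

theorem exists_Dop_eq_zero_of_vertical_reflection {w : ℤ} {g : ℂ → ℂ} {c : ℕ → ℝ}
    (hg : IsModularForm w g fun n => (c n : ℂ)) (hc : c 0 = 0)
    {p q r : ℤ} (hpqr : -p ^ 2 - q * r = 1) (hr : 0 < r) {x : ℝ} (hx : (p : ℝ) = r * x)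
    (hqx : (Complex.exp (twoPiI * x)).im = 0) :
    ∃ y : ℝ, 0 < y ∧ Dop g (x + Complex.I * y) = 0 := by
  obtain ⟨hdiff, hmod, hqexp⟩ := hg
  set ψ : ℝ → ℂ := fun y => g (x + Complex.I * y)
  have hmem : ∀ y ∈ Ioi (0 : ℝ), (x : ℂ) + Complex.I * y ∈ UHP := fun y hy => by
    simpa [UHP] using hy
  have hψ : ψ =O[atTop] fun y => Real.exp (-(2 * π * y)) := hqexp.isBigO_atTop (by simp [hc]) x
  have hderiv : ∀ y ∈ Ioi (0 : ℝ), HasDerivAt ψ (deriv g (x + Complex.I * y) * Complex.I) y :=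
    fun y hy => by
      have hline : HasDerivAt (fun t : ℂ => x + Complex.I * t) Complex.I y := by
        simpa using ((hasDerivAt_id (y : ℂ)).const_mul Complex.I).const_add (x : ℂ)
      exact ((hdiff.differentiableAt (isOpen_UHP.mem_nhds (hmem y hy))).hasDerivAt.comp
        (y : ℂ) hline).comp_ofReal
  have hreal : ∀ y ∈ Ioi (0 : ℝ), (ψ y).im = 0 := fun y hy => by
    refine hqexp.im_eq_zero (hmem y hy) ?_
    have hvert : twoPiI * (Complex.I * y) = ((-(2 * π * y) : ℝ) : ℂ) := by
      simp only [twoPiI]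
      push_cast
      linear_combination (2 * π * y : ℂ) * Complex.I_sq
    rw [mul_add, Complex.exp_add, Complex.mul_im, hqx, hvert, Complex.exp_ofReal_im]
    ring
  have htop : Tendsto ψ atTop (𝓝 0) := hψ.trans_tendsto <| Real.tendsto_exp_atBot.comp <|
    tendsto_neg_atTop_atBot.comp (tendsto_id.const_mul_atTop (by positivity))
  have hzero : Tendsto ψ (𝓝[>] 0) (𝓝 0) := by
    refine tendsto_nhdsGT_zero_of_norm_apply_inv (r := r) (w := w) (by exact_mod_cast hr)
      (by positivity) hψ fun y hy => ?_
    have hry : (0 : ℝ) ≤ r * y := by positivity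
    simp only [ψ]
    rw [hmod.apply_vertical_reflection hpqr hr hx hy, norm_mul, norm_zpow, norm_mul,
      Complex.norm_I, one_mul, Complex.norm_real, Real.norm_of_nonneg hry]
  obtain ⟨y, hy, hcrit⟩ := exists_hasDerivAt_eq_zero_Ioi_of_im_eq_zero hzero htop hderiv hreal
  refine ⟨y, hy, ?_⟩
  simp [Dop, (mul_eq_zero.1 hcrit).resolve_right Complex.I_ne_zero]

theorem stmt3_general (k : ℤ) (g : ℂ → ℂ) (c : ℕ → ℝ)
    (hg : IsModularForm (k - 2) g (fun n => ((c n : ℝ) : ℂ)))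
    (hcusp : c 0 = 0) :
    (∃ y : ℝ, 0 < y ∧ Dop g (Complex.I * y) = 0) ∧
    (∃ y : ℝ, 0 < y ∧ Dop g ((1/2 : ℂ) + Complex.I * y) = 0) := by
  constructor
  · simpa using exists_Dop_eq_zero_of_vertical_reflection hg hcusp (p := 0) (q := -1) (r := 1)
      (x := 0) (by norm_num) one_pos (by simp) (by simp)
  · have hqx : (Complex.exp (twoPiI * ((1 / 2 : ℝ) : ℂ))).im = 0 := by
      rw [show twoPiI * ((1 / 2 : ℝ) : ℂ) = π * Complex.I by simp [twoPiI]; ring,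
        Complex.exp_pi_mul_I]
      simp
    simpa using exists_Dop_eq_zero_of_vertical_reflection hg hcusp (p := 1) (q := -1) (r := 2)
      (x := 1 / 2) (by norm_num) two_pos (by norm_num) hqx

/-- If `g` is a nonzero cusp form of even weight `k - 2` with real
Fourier coefficients, then `f = Dg` has a zero on the central line `Re z = 0` and a
zero on the line `Re z = 1/2`. -/
theorem stmt3 (k : ℤ) (hke : Even k) (g : ℂ → ℂ) (c : ℕ → ℝ)
    (hg : IsModularForm (k - 2) g (fun n => ((c n : ℝ) : ℂ)))
    (hcusp : c 0 = 0) (hne : ∃ n, c n ≠ 0) :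
    (∃ y : ℝ, 0 < y ∧ Dop g (Complex.I * y) = 0) ∧
    (∃ y : ℝ, 0 < y ∧ Dop g ((1/2 : ℂ) + Complex.I * y) = 0) :=
  stmt3_general k g c hg hcusp
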